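/- arXiv:1811.10059 — 6 statements merged into one kernel-verified Lean document; each statement's English description precedes it below -/
import Mathlib

section
/- The set X^ω of infinite words over X is not paradoxical with respect to the action of G_0: there do not exist automorphisms g_1,...,g_n, h_1,...,h_m in G_0 and pairwise disjoint subsets A_1,...,A_n, B_1,...,B_m of X^ω such that X^ω = ⋃_i g_i·A_i and X^ω = ⋃_j h_j·B_j. -/
/-- An automorphism of the rooted tree `X*` of finite words over `X`:
a length-preserving, prefix-preserving bijection of `List X`. -/
structure TreeAut (X : Type*) where
  toFun : List X → List X
  length_eq : ∀ w : List X, (toFun w).length = w.length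
  prefix_mono : ∀ u v : List X, u <+: v → toFun u <+: toFun v
  bijective : Function.Bijective toFun

/-- The identity automorphism of the rooted tree. -/
def TreeAut.id (X : Type*) : TreeAut X :=
  ⟨fun w => w, fun _ => rfl, fun _ _ h => h, Function.bijective_id⟩

/-- The product `g·h`: first apply `g`, then `h`. -/
def TreeAut.comp {X : Type*} (g h : TreeAut X) : TreeAut X :=
  ⟨fun w => h.toFun (g.toFun w),
   fun w => by rw [h.length_eq, g.length_eq],
   fun u v huv => h.prefix_mono _ _ (g.prefix_mono _ _ huv),
   Function.Bijective.comp h.bijective g.bijective⟩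

/-- `IsSection g w s` : `s` is the section `g|_w` of `g` at the word `w`,
i.e. `g (w ++ u) = g w ++ s u` for all finite words `u`. -/
def IsSection {X : Type*} (g : TreeAut X) (w : List X) (s : TreeAut X) : Prop :=
  ∀ u : List X, g.toFun (w ++ u) = g.toFun w ++ s.toFun u

/-- `NS g l` : the number of words of length `l` whose section under `g`
is not the identity automorphism. -/
noncomputable def NS {X : Type*} (g : TreeAut X) (l : ℕ) : ℕ :=
  {w : List X | w.length = l ∧ ∃ u : List X, g.toFun (w ++ u) ≠ g.toFun w ++ u}.ncard

/-- `a` belongs to an unconditional cycle of length `n`: there are automorphisms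
`a_0 = a, a_1, ..., a_{n-1}` such that for every `i < n` and every letter `x`,
the section of `a_i` at `x` is `a_{(i+1) mod n}`. -/
def InUC {X : Type*} (a : TreeAut X) (n : ℕ) : Prop :=
  0 < n ∧ ∃ f : ℕ → TreeAut X, f 0 = a ∧
    ∀ i < n, ∀ x : X, IsSection (f i) [x] (f ((i + 1) % n))

/-- `NC g l` : the number of words of length `l` whose section under `g`
does not belong to any unconditional cycle. -/
noncomputable def NC {X : Type*} (g : TreeAut X) (l : ℕ) : ℕ :=
  {w : List X | w.length = l ∧
    ¬ ∃ (s : TreeAut X) (n : ℕ), IsSection g w s ∧ InUC s n}.ncard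

/-- Membership in `G₀`: `NS g l = o(|X|^l)` as `l → ∞`. -/
def memG0 {X : Type*} [Fintype X] (g : TreeAut X) : Prop :=
  ∀ ε : ℝ, 0 < ε → ∃ L : ℕ, ∀ l ≥ L, (NS g l : ℝ) ≤ ε * (Fintype.card X : ℝ) ^ l

/-- Membership in `G₁`: `NC g l = o(|X|^l)` as `l → ∞`. -/
def memG1 {X : Type*} [Fintype X] (g : TreeAut X) : Prop :=
  ∀ ε : ℝ, 0 < ε → ∃ L : ℕ, ∀ l ≥ L, (NC g l : ℝ) ≤ ε * (Fintype.card X : ℝ) ^ l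

/-- The prefix of length `n` of an infinite word `w : ℕ → X`. -/
def prefixOf {X : Type*} (w : ℕ → X) (n : ℕ) : List X := (List.range n).map w

/-- `actsOn g w gw` : `gw` is the image `g·w` of the infinite word `w` under
the action of `g` on infinite words (prefixes of `gw` are the `g`-images of
the prefixes of `w`). -/
def actsOn {X : Type*} (g : TreeAut X) (w gw : ℕ → X) : Prop :=
  ∀ n : ℕ, g.toFun (prefixOf w n) = prefixOf gw n

/-- The image `g·A` of a set `A` of infinite words under the action of `g`. -/
def actImage {X : Type*} (g : TreeAut X) (A : Set (ℕ → X)) : Set (ℕ → X) :=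
  {v | ∃ w ∈ A, actsOn g w v}
section NotParadoxical

open Classical

variable {X : Type*}

/-- The infinite word with prefix `v` and constant tail `x0`. -/
def pt (l : ℕ) (x0 : X) (v : Fin l → X) : ℕ → X :=
  fun k => if h : k < l then v ⟨k, h⟩ else x0

lemma prefixOf_pt (l : ℕ) (x0 : X) (v : Fin l → X) :
    prefixOf (pt l x0 v) l = List.ofFn v := by
  apply List.ext_getElem (by simp [prefixOf])
  intro i h1 h2
  have hi : i < l := by simpa [prefixOf] using h1
  simp [prefixOf, pt, hi]

lemma prefixOf_add (w : ℕ → X) (l s : ℕ) :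
    prefixOf w (l + s) = prefixOf w l ++ (List.range s).map (fun j => w (l + j)) := by
  simp [prefixOf, List.range_add, List.map_map, Function.comp]

lemma exists_ofFn_eq {l : ℕ} (w : List X) (hw : w.length = l) :
    ∃ v : Fin l → X, List.ofFn v = w := by
  subst hw; exact ⟨w.get, List.ofFn_get w⟩

/-- The action of `g` on level `l`, as a map on `Fin l → X`. -/
noncomputable def lvl (g : TreeAut X) (l : ℕ) (v : Fin l → X) : Fin l → X :=
  fun i => (g.toFun (List.ofFn v))[(i : ℕ)]'(by rw [g.length_eq, List.length_ofFn]; exact i.isLt)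

lemma ofFn_lvl (g : TreeAut X) (l : ℕ) (v : Fin l → X) :
    List.ofFn (lvl g l v) = g.toFun (List.ofFn v) := by
  apply List.ext_getElem (by rw [List.length_ofFn, g.length_eq, List.length_ofFn])
  intro i h1 h2
  simp [lvl]

/-- The counting "measure" at level `l` with tail letter `x0`. -/
noncomputable def cnt [Fintype X] (l : ℕ) (x0 : X) (A : Set (ℕ → X)) : ℕ :=
  (Finset.univ.filter (fun v : Fin l → X => pt l x0 v ∈ A)).card

lemma cnt_cover [Fintype X] {l : ℕ} {x0 : X} {n : ℕ} (C : Fin n → Set (ℕ → X))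
    (hcov : (⋃ i, C i) = Set.univ) :
    Fintype.card X ^ l ≤ ∑ i, cnt l x0 (C i) := by
  classical
  have hsub : (Finset.univ : Finset (Fin l → X)) ⊆
      Finset.univ.biUnion (fun i : Fin n =>
        Finset.univ.filter (fun v : Fin l → X => pt l x0 v ∈ C i)) := by
    intro v _
    have : pt l x0 v ∈ ⋃ i, C i := hcov ▸ Set.mem_univ _
    obtain ⟨i, hi⟩ := Set.mem_iUnion.mp this
    exact Finset.mem_biUnion.mpr ⟨i, Finset.mem_univ _, Finset.mem_filter.mpr ⟨Finset.mem_univ _, hi⟩⟩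
  calc Fintype.card X ^ l = (Finset.univ : Finset (Fin l → X)).card := by
        simp [Fintype.card_fun]
    _ ≤ _ := Finset.card_le_card hsub
    _ ≤ ∑ i, cnt l x0 (C i) := Finset.card_biUnion_le

lemma cnt_disjoint_sum [Fintype X] {l : ℕ} {x0 : X} {ι : Type*} [Fintype ι]
    (C : ι → Set (ℕ → X)) (hd : ∀ i j, i ≠ j → Disjoint (C i) (C j)) :
    ∑ i, cnt l x0 (C i) ≤ Fintype.card X ^ l := by
  classical
  have hdis : ∀ i ∈ (Finset.univ : Finset ι), ∀ j ∈ (Finset.univ : Finset ι), i ≠ j →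
      Disjoint (Finset.univ.filter (fun v : Fin l → X => pt l x0 v ∈ C i))
        (Finset.univ.filter (fun v : Fin l → X => pt l x0 v ∈ C j)) := by
    intro i _ j _ hij
    rw [Finset.disjoint_left]
    intro v hvi hvj
    exact Set.disjoint_left.mp (hd i j hij) (Finset.mem_filter.mp hvi).2
      (Finset.mem_filter.mp hvj).2
  calc ∑ i, cnt l x0 (C i)
      = (Finset.univ.biUnion (fun i : ι =>
          Finset.univ.filter (fun v : Fin l → X => pt l x0 v ∈ C i))).card :=
        (Finset.card_biUnion hdis).symm
    _ ≤ (Finset.univ : Finset (Fin l → X)).card := Finset.card_le_card (Finset.subset_univ _)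
    _ = Fintype.card X ^ l := by simp [Fintype.card_fun]

lemma card_bad_le [Fintype X] (g : TreeAut X) (l : ℕ) :
    (Finset.univ.filter (fun v : Fin l → X =>
      ∃ u : List X, g.toFun (List.ofFn v ++ u) ≠ g.toFun (List.ofFn v) ++ u)).card ≤ NS g l := by
  classical
  set S := {w : List X | w.length = l ∧ ∃ u : List X, g.toFun (w ++ u) ≠ g.toFun w ++ u} with hS
  have hfin : S.Finite := by
    apply Set.Finite.subset (Set.finite_range (fun v : Fin l → X => List.ofFn v))
    intro w hw
    obtain ⟨v, hv⟩ := exists_ofFn_eq w hw.1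
    exact ⟨v, hv⟩
  have hNS : NS g l = hfin.toFinset.card := by
    rw [NS, Set.ncard_eq_toFinset_card _ hfin]
  rw [hNS]
  set F := Finset.univ.filter (fun v : Fin l → X =>
      ∃ u : List X, g.toFun (List.ofFn v ++ u) ≠ g.toFun (List.ofFn v) ++ u) with hF
  have himg : F.image (fun v : Fin l → X => List.ofFn v) ⊆ hfin.toFinset := by
    intro w hw
    obtain ⟨v, hv, rfl⟩ := Finset.mem_image.mp hw
    rw [Set.Finite.mem_toFinset]
    exact ⟨List.length_ofFn, (Finset.mem_filter.mp hv).2⟩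
  calc F.card = (F.image (fun v : Fin l → X => List.ofFn v)).card :=
        (Finset.card_image_of_injective F List.ofFn_injective).symm
    _ ≤ hfin.toFinset.card := Finset.card_le_card himg

lemma cnt_actImage_le [Fintype X] (g : TreeAut X) (l : ℕ) (x0 : X)
    (A : Set (ℕ → X)) : cnt l x0 (actImage g A) ≤ cnt l x0 A + NS g l := by
  classical
  set FA := Finset.univ.filter (fun v : Fin l → X => pt l x0 v ∈ A) with hFA
  set Fbad := Finset.univ.filter (fun v : Fin l → X =>
      ∃ u : List X, g.toFun (List.ofFn v ++ u) ≠ g.toFun (List.ofFn v) ++ u) with hFbad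
  have hsub : Finset.univ.filter (fun v : Fin l → X => pt l x0 v ∈ actImage g A)
      ⊆ FA.image (lvl g l) ∪ Fbad.image (lvl g l) := by
    intro v hv
    obtain ⟨u, huA, hact⟩ := (Finset.mem_filter.mp hv).2
    set w := prefixOf u l with hw
    have hwl : w.length = l := by simp [hw, prefixOf]
    obtain ⟨vw, hvw⟩ := exists_ofFn_eq w hwl
    have hgw : g.toFun w = List.ofFn v := by
      have := hact l
      rwa [prefixOf_pt] at this
    have hlvl : lvl g l vw = v := by
      apply List.ofFn_injective
      rw [ofFn_lvl, hvw, hgw]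
    by_cases hbad : ∃ u' : List X, g.toFun (w ++ u') ≠ g.toFun w ++ u'
    · refine Finset.mem_union_right _ (Finset.mem_image.mpr ⟨vw, ?_, hlvl⟩)
      rw [hFbad, Finset.mem_filter]
      exact ⟨Finset.mem_univ _, hvw ▸ hbad⟩
    · push_neg at hbad
      have htail : ∀ k, l ≤ k → u k = x0 := by
        intro k hk
        set s := k + 1 - l with hs
        have hact2 := hact (l + s)
        rw [prefixOf_add u l s, ← hw, prefixOf_add (pt l x0 v) l s, hbad, prefixOf_pt,
          ← hgw] at hact2
        have heq := List.append_cancel_left hact2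
        have h5 : ((List.range s).map (fun j => u (l + j)))[k - l]? =
            ((List.range s).map (fun j => pt l x0 v (l + j)))[k - l]? := by rw [heq]
        have hkl : k - l < s := by omega
        simp only [List.getElem?_map, List.getElem?_range, hkl, if_pos] at h5
        have h6 : u (l + (k - l)) = pt l x0 v (l + (k - l)) := by simpa using h5
        rw [show l + (k - l) = k by omega] at h6
        rw [h6]
        simp [pt, show ¬ (k < l) by omega]
      have hu : u = pt l x0 vw := by
        funext k
        by_cases hk : k < l
        · have h1 : (List.ofFn vw)[k]? = w[k]? := by rw [hvw]
          have h2 : w[k]? = some (u k) := by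
            simp [hw, prefixOf, List.getElem?_map, List.getElem?_range, hk]
          rw [h2] at h1
          simp only [List.getElem?_ofFn, List.ofFnNthVal, hk, dif_pos, Option.some.injEq] at h1
          simp only [pt, hk, dif_pos]
          exact h1.symm
        · simp only [pt, hk, dif_neg, dite_false]
          exact htail k (by omega)
      refine Finset.mem_union_left _ (Finset.mem_image.mpr ⟨vw, ?_, hlvl⟩)
      rw [hFA, Finset.mem_filter]
      exact ⟨Finset.mem_univ _, hu ▸ huA⟩
  calc cnt l x0 (actImage g A)
      ≤ (FA.image (lvl g l) ∪ Fbad.image (lvl g l)).card := Finset.card_le_card hsub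
    _ ≤ (FA.image (lvl g l)).card + (Fbad.image (lvl g l)).card := Finset.card_union_le _ _
    _ ≤ FA.card + Fbad.card := Nat.add_le_add (Finset.card_image_le) (Finset.card_image_le)
    _ ≤ cnt l x0 A + NS g l := Nat.add_le_add le_rfl (card_bad_le g l)

end NotParadoxical

/-- `X^ω` is not `G₀`-paradoxical. -/
theorem not_paradoxical_G0 {X : Type*} [Fintype X] (hX : 1 < Fintype.card X) :
    ¬ ∃ (n m : ℕ) (g : Fin n → TreeAut X) (h : Fin m → TreeAut X)
        (A : Fin n → Set (ℕ → X)) (B : Fin m → Set (ℕ → X)),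
      (∀ i, memG0 (g i)) ∧ (∀ j, memG0 (h j)) ∧
      (∀ i j, i ≠ j → Disjoint (A i) (A j)) ∧
      (∀ i j, i ≠ j → Disjoint (B i) (B j)) ∧
      (∀ i j, Disjoint (A i) (B j)) ∧
      (⋃ i, actImage (g i) (A i)) = Set.univ ∧
      (⋃ j, actImage (h j) (B j)) = Set.univ := by
  classical
  rintro ⟨n, m, g, h, A, B, hg, hh, hA, hB, hAB, hcovA, hcovB⟩
  obtain ⟨x0⟩ : Nonempty X := Fintype.card_pos_iff.mp (by omega)
  set ε : ℝ := 1 / (2 * (n + m) + 2) with hεdef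
  have hεpos : 0 < ε := by positivity
  choose Lg hLg using fun i => hg i ε hεpos
  choose Lh hLh using fun j => hh j ε hεpos
  set l : ℕ := (Finset.univ.sup Lg) ⊔ (Finset.univ.sup Lh) with hl
  have hlg : ∀ i, Lg i ≤ l := fun i =>
    le_sup_of_le_left (Finset.le_sup (Finset.mem_univ i))
  have hlh : ∀ j, Lh j ≤ l := fun j =>
    le_sup_of_le_right (Finset.le_sup (Finset.mem_univ j))
  set N : ℝ := (Fintype.card X : ℝ) ^ l with hN
  have hN1 : (1 : ℝ) ≤ N := one_le_pow₀ (by exact_mod_cast hX.le)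
  have hcastN : ((Fintype.card X ^ l : ℕ) : ℝ) = N := by push_cast [hN]; ring
  have keyA : N ≤ (∑ i, (cnt l x0 (A i) : ℝ)) + n * (ε * N) := by
    have h1 : Fintype.card X ^ l ≤ ∑ i, (cnt l x0 (A i) + NS (g i) l) :=
      le_trans (cnt_cover (fun i => actImage (g i) (A i)) hcovA)
        (Finset.sum_le_sum fun i _ => cnt_actImage_le (g i) l x0 (A i))
    have h2 : (∑ i, (NS (g i) l : ℝ)) ≤ n * (ε * N) := by
      calc (∑ i, (NS (g i) l : ℝ)) ≤ ∑ _i : Fin n, ε * N :=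
            Finset.sum_le_sum fun i _ => hLg i l (hlg i)
        _ = n * (ε * N) := by simp [Finset.sum_const, mul_comm]
    have h1' : N ≤ ∑ i, ((cnt l x0 (A i) : ℝ) + (NS (g i) l : ℝ)) := by
      rw [← hcastN]
      exact_mod_cast h1
    rw [Finset.sum_add_distrib] at h1'
    linarith
  have keyB : N ≤ (∑ j, (cnt l x0 (B j) : ℝ)) + m * (ε * N) := by
    have h1 : Fintype.card X ^ l ≤ ∑ j, (cnt l x0 (B j) + NS (h j) l) :=
      le_trans (cnt_cover (fun j => actImage (h j) (B j)) hcovB)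
        (Finset.sum_le_sum fun j _ => cnt_actImage_le (h j) l x0 (B j))
    have h2 : (∑ j, (NS (h j) l : ℝ)) ≤ m * (ε * N) := by
      calc (∑ j, (NS (h j) l : ℝ)) ≤ ∑ _j : Fin m, ε * N :=
            Finset.sum_le_sum fun j _ => hLh j l (hlh j)
        _ = m * (ε * N) := by simp [Finset.sum_const, mul_comm]
    have h1' : N ≤ ∑ j, ((cnt l x0 (B j) : ℝ) + (NS (h j) l : ℝ)) := by
      rw [← hcastN]
      exact_mod_cast h1
    rw [Finset.sum_add_distrib] at h1'
    linarith
  have hdisj : (∑ i, (cnt l x0 (A i) : ℝ)) + (∑ j, (cnt l x0 (B j) : ℝ)) ≤ N := by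
    have h1 : ∑ k : Fin n ⊕ Fin m, cnt l x0 (Sum.elim A B k) ≤ Fintype.card X ^ l := by
      apply cnt_disjoint_sum
      rintro (i | i) (j | j) hij
      · exact hA i j (by simpa using hij)
      · exact hAB i j
      · exact (hAB j i).symm
      · exact hB i j (by simpa using hij)
    rw [Fintype.sum_sum_type] at h1
    have h1' : ((∑ i, cnt l x0 (A i) + ∑ j, cnt l x0 (B j) : ℕ) : ℝ) ≤ N := by
      rw [← hcastN]
      exact_mod_cast h1
    push_cast at h1'
    linarith
  have hq : ((n : ℝ) + m) * ε ≤ 1 / 2 := by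
    rw [hεdef, mul_one_div, div_le_div_iff₀ (by positivity) (by norm_num)]
    nlinarith [Nat.cast_nonneg (α := ℝ) n, Nat.cast_nonneg (α := ℝ) m]
  nlinarith [hN1, keyA, keyB, hdisj, hq, hεpos]
end

section
/- Let g, h be automorphisms of X* and w a finite word. If the section g|_w belongs to an unconditional cycle of length n and the section h|_{g(w)} belongs to an unconditional cycle of length m, then the section (g·h)|_w belongs to an unconditional cycle of length lcm(n, m). -/
/-- if `g|_w` belongs to a UC of length `n` and `h|_{g(w)}` to a UC
of length `m`, then `(g·h)|_w` belongs to a UC of length `lcm(n,m)`. -/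
theorem section_comp_inUC_lcm {X : Type*} [Fintype X] (hX : 1 < Fintype.card X)
    (g h : TreeAut X) (w : List X) (n m : ℕ) (s t : TreeAut X)
    (hs : IsSection g w s) (ht : IsSection h (g.toFun w) t)
    (hsUC : InUC s n) (htUC : InUC t m) :
    ∃ st : TreeAut X, IsSection (g.comp h) w st ∧ InUC st (Nat.lcm n m) := by
  obtain ⟨hn, f, hf0, hf⟩ := hsUC
  obtain ⟨hm, k, hk0, hk⟩ := htUC
  refine ⟨s.comp t, ?_, ?_⟩
  · intro u
    show h.toFun (g.toFun (w ++ u)) = h.toFun (g.toFun w) ++ t.toFun (s.toFun u)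
    rw [hs, ht]
  · refine ⟨Nat.pos_of_ne_zero (Nat.lcm_ne_zero hn.ne' hm.ne'),
      fun i => (f (i % n)).comp (k (i % m)), by simp [hf0, hk0], ?_⟩
    intro i _ x u
    have hn' : i % n < n := Nat.mod_lt _ hn
    have hm' : i % m < m := Nat.mod_lt _ hm
    obtain ⟨y, hy⟩ : ∃ y, (f (i % n)).toFun [x] = [y] :=
      List.length_eq_one_iff.mp ((f (i % n)).length_eq [x])
    have e1 : ((i + 1) % Nat.lcm n m) % n = (i % n + 1) % n := by
      rw [Nat.mod_mod_of_dvd _ (Nat.dvd_lcm_left n m)]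
      conv_lhs => rw [Nat.add_mod]
      conv_rhs => rw [Nat.add_mod, Nat.mod_mod_of_dvd _ dvd_rfl]
    have e2 : ((i + 1) % Nat.lcm n m) % m = (i % m + 1) % m := by
      rw [Nat.mod_mod_of_dvd _ (Nat.dvd_lcm_right n m)]
      conv_lhs => rw [Nat.add_mod]
      conv_rhs => rw [Nat.add_mod, Nat.mod_mod_of_dvd _ dvd_rfl]
    show (k (i % m)).toFun ((f (i % n)).toFun ([x] ++ u)) =
      (k (i % m)).toFun ((f (i % n)).toFun [x]) ++ _
    rw [hf (i % n) hn' x u, hy]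
    beta_reduce
    rw [e1, e2]
    exact hk (i % m) hm' y _
end

section
/- If an automorphism a of X* belongs to an unconditional cycle of length n and an automorphism b of X* belongs to an unconditional cycle of length m, then the product a·b belongs to an unconditional cycle of length lcm(n, m). -/
/-- if `a` belongs to a UC of length `n` and `b` to a UC of length
`m`, then `a·b` belongs to a UC of length `lcm(n,m)`. -/
theorem comp_inUC_lcm {X : Type*} [Fintype X] (hX : 1 < Fintype.card X)
    (a b : TreeAut X) (n m : ℕ) (ha : InUC a n) (hb : InUC b m) :
    InUC (a.comp b) (Nat.lcm n m) := by
  obtain ⟨hn, f, hf0, hf⟩ := ha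
  obtain ⟨hm, g, hg0, hg⟩ := hb
  have hL : 0 < Nat.lcm n m := Nat.lcm_pos hn hm
  refine ⟨hL, fun i => (f (i % n)).comp (g (i % m)), by simp [hf0, hg0], ?_⟩
  intro i _ x u
  have hyl : ((f (i % n)).toFun [x]).length = 1 := (f (i % n)).length_eq [x]
  obtain ⟨y, hy⟩ := List.length_eq_one_iff.mp hyl
  have hfn : (i + 1) % Nat.lcm n m % n = (i % n + 1) % n := by
    rw [Nat.mod_mod_of_dvd _ (Nat.dvd_lcm_left n m)]
    conv_lhs => rw [Nat.add_mod]
    rw [Nat.add_mod (i % n) 1]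
    simp
  have hgm : (i + 1) % Nat.lcm n m % m = (i % m + 1) % m := by
    rw [Nat.mod_mod_of_dvd _ (Nat.dvd_lcm_right n m)]
    conv_lhs => rw [Nat.add_mod]
    rw [Nat.add_mod (i % m) 1]
    simp
  simp only [TreeAut.comp, hfn, hgm]
  have h1 := hf (i % n) (Nat.mod_lt i hn) x u
  have h2 := hg (i % m) (Nat.mod_lt i hm) y ((f ((i % n + 1) % n)).toFun u)
  simp only [h1, hy]
  have : [x] ++ u = x :: u := rfl
  rw [List.singleton_append] at h1 h2 ⊢
  rw [h2]
end

section
/- For all automorphisms g, h of the rooted tree X* and every natural number l, NC(g·h, l) ≤ NC(g, l) + NC(h, l). -/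
lemma comp_section {X : Type*} {g h sg sh : TreeAut X} {w : List X}
    (hg : IsSection g w sg) (hh : IsSection h (g.toFun w) sh) :
    IsSection (g.comp h) w (sg.comp sh) := by
  intro u
  show h.toFun (g.toFun (w ++ u)) = h.toFun (g.toFun w) ++ sh.toFun (sg.toFun u)
  rw [hg u, hh (sg.toFun u)]

lemma InUC_comp {X : Type*} {a b : TreeAut X} {n m : ℕ}
    (ha : InUC a n) (hb : InUC b m) : InUC (a.comp b) (n * m) := by
  obtain ⟨hn, fa, ha0, hfa⟩ := ha
  obtain ⟨hm, fb, hb0, hfb⟩ := hb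
  refine ⟨Nat.mul_pos hn hm, fun k => (fa (k % n)).comp (fb (k % m)), ?_, ?_⟩
  · simp [Nat.zero_mod, ha0, hb0]
  · intro i _ x
    have e1 : (i + 1) % (n * m) % n = (i % n + 1) % n := by
      rw [Nat.mod_mod_of_dvd _ ⟨m, rfl⟩, Nat.mod_add_mod]
    have e2 : (i + 1) % (n * m) % m = (i % m + 1) % m := by
      rw [Nat.mod_mod_of_dvd _ ⟨n, Nat.mul_comm n m⟩, Nat.mod_add_mod]
    have hsa : IsSection (fa (i % n)) [x] (fa ((i % n + 1) % n)) :=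
      hfa (i % n) (Nat.mod_lt _ hn) x
    obtain ⟨y, hy⟩ : ∃ y, (fa (i % n)).toFun [x] = [y] := by
      have := (fa (i % n)).length_eq [x]
      cases h : (fa (i % n)).toFun [x] with
      | nil => rw [h] at this; simp at this
      | cons y t =>
        rw [h] at this; simp at this
        exact ⟨y, by simp [this]⟩
    have hsb : IsSection (fb (i % m)) [y] (fb ((i % m + 1) % m)) :=
      hfb (i % m) (Nat.mod_lt _ hm) y
    have := comp_section (w := [x]) hsa (by rw [hy]; exact hsb)
    simpa only [e1, e2] using this

/-- `NC(g·h, l) ≤ NC(g, l) + NC(h, l)`. -/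
theorem NC_comp_le {X : Type*} [Fintype X] (hX : 1 < Fintype.card X)
    (g h : TreeAut X) (l : ℕ) :
    NC (g.comp h) l ≤ NC g l + NC h l := by
  classical
  unfold NC
  set A := {w : List X | w.length = l ∧
    ¬ ∃ (s : TreeAut X) (n : ℕ), IsSection (g.comp h) w s ∧ InUC s n} with hA
  set B := {w : List X | w.length = l ∧
    ¬ ∃ (s : TreeAut X) (n : ℕ), IsSection g w s ∧ InUC s n} with hB
  set C := {w : List X | w.length = l ∧
    ¬ ∃ (s : TreeAut X) (n : ℕ), IsSection h w s ∧ InUC s n} with hC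
  have hfin : {w : List X | w.length = l}.Finite := List.finite_length_eq X l
  have hBfin : B.Finite := hfin.subset fun w hw => hw.1
  have hCfin : C.Finite := hfin.subset fun w hw => hw.1
  have hPfin : (g.toFun ⁻¹' C).Finite := hfin.subset (by
    intro w hw
    have : (g.toFun w).length = l := hw.1
    simpa [g.length_eq] using this)
  have hsub : A ⊆ B ∪ g.toFun ⁻¹' C := by
    rintro w ⟨hl, hbad⟩
    by_cases hB' : w ∈ B
    · exact Or.inl hB'
    by_cases hC' : g.toFun w ∈ C
    · exact Or.inr hC'
    exfalso
    simp only [hB, Set.mem_setOf_eq, hl, true_and, not_not] at hB'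
    obtain ⟨sg, ng, hsg, hug⟩ := hB'
    simp only [hC, Set.mem_setOf_eq, not_and, not_not] at hC'
    obtain ⟨sh, nh, hsh, huh⟩ := hC' (by simp [g.length_eq, hl])
    exact hbad ⟨sg.comp sh, ng * nh, comp_section hsg hsh, InUC_comp hug huh⟩
  have h1 : A.ncard ≤ (B ∪ g.toFun ⁻¹' C).ncard :=
    Set.ncard_le_ncard hsub (hBfin.union hPfin)
  have h2 : (B ∪ g.toFun ⁻¹' C).ncard ≤ B.ncard + (g.toFun ⁻¹' C).ncard :=
    Set.ncard_union_le _ _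
  have h3 : (g.toFun ⁻¹' C).ncard ≤ C.ncard := by
    rw [← Set.ncard_image_of_injective _ g.bijective.injective]
    exact Set.ncard_le_ncard (Set.image_preimage_subset _ _) hCfin
  calc A.ncard ≤ B.ncard + (g.toFun ⁻¹' C).ncard := h1.trans h2
    _ ≤ B.ncard + C.ncard := by omega
end

section
/- Let g be an automorphism of X* and l, c ≥ 1 natural numbers such that for every word v of length l, whenever the section g|_v belongs to some unconditional cycle, it belongs to one of length at most c. Let w be an infinite word over X with w(k + c!) = w(k) for all k ≥ l, and suppose the section of g at the prefix w[:l] belongs to some unconditional cycle. Then (g·w)(k + c!) = (g·w)(k) for all k ≥ l; that is, g maps P_c^l minus the exceptional set into P_c^l, where P_c^l is the set of infinite words that are periodic beyond position l with period length dividing c!. -/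
lemma TreeAut.toFun_nil {X : Type*} (g : TreeAut X) : g.toFun [] = [] :=
  List.eq_nil_of_length_eq_zero (g.length_eq [])

lemma IsSection.nil {X : Type*} (g : TreeAut X) : IsSection g [] g := by
  intro u; simp [g.toFun_nil]

lemma IsSection.compSec {X : Type*} {g : TreeAut X} {v u : List X} {s t : TreeAut X}
    (hs : IsSection g v s) (ht : IsSection s u t) : IsSection g (v ++ u) t := by
  intro u'
  rw [List.append_assoc, hs, ht, hs u, List.append_assoc]

lemma prefixOf_succ {X : Type*} (w : ℕ → X) (n : ℕ) :
    prefixOf w (n + 1) = prefixOf w n ++ [w n] := by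
  simp [prefixOf, List.range_succ]

lemma prefixOf_add_s12 {X : Type*} (w : ℕ → X) (m n : ℕ) :
    prefixOf w (m + n) = prefixOf w m ++ prefixOf (fun i => w (m + i)) n := by
  simp [prefixOf, List.range_add, List.map_map, Function.comp]

/-- `g` maps `P_c^l` minus the exceptional set into `P_c^l`. -/
theorem image_mem_P {X : Type*} [Fintype X] (hX : 1 < Fintype.card X)
    (g : TreeAut X) (l c : ℕ) (hl : 1 ≤ l) (hc : 1 ≤ c)
    (hbound : ∀ v : List X, v.length = l → ∀ s : TreeAut X, IsSection g v s →
      (∃ n : ℕ, InUC s n) → ∃ n ≤ c, InUC s n)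
    (w : ℕ → X) (hw : ∀ k ≥ l, w (k + Nat.factorial c) = w k)
    (hsec : ∃ s : TreeAut X, IsSection g (prefixOf w l) s ∧ ∃ n : ℕ, InUC s n)
    (gw : ℕ → X) (hact : actsOn g w gw) :
    ∀ k ≥ l, gw (k + Nat.factorial c) = gw k := by
  obtain ⟨s, hs, hucex⟩ := hsec
  obtain ⟨n, hn_le, hnpos, f, hf0, hf⟩ :=
    hbound (prefixOf w l) (by simp [prefixOf]) s hs hucex
  set t : ℕ → X := fun i => w (l + i) with ht
  have hsec_t : ∀ m, IsSection s (prefixOf t m) (f (m % n)) := by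
    intro m
    induction m with
    | zero =>
      have h0 : prefixOf t 0 = ([] : List X) := by simp [prefixOf]
      rw [h0, Nat.zero_mod, hf0]
      exact IsSection.nil s
    | succ m ih =>
      rw [prefixOf_succ]
      have hstep : IsSection (f (m % n)) [t m] (f ((m + 1) % n)) := by
        have h := hf (m % n) (Nat.mod_lt _ hnpos) (t m)
        rwa [Nat.mod_add_mod] at h
      exact ih.compSec hstep
  have hletter : ∀ m : ℕ, [gw (l + m)] = (f (m % n)).toFun [t m] := by
    intro m
    have h1 : prefixOf gw (l + m + 1) = prefixOf gw (l + m) ++ [gw (l + m)] :=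
      prefixOf_succ gw (l + m)
    have h2 : prefixOf gw (l + m) = g.toFun (prefixOf w l) ++ s.toFun (prefixOf t m) := by
      rw [← hact, prefixOf_add_s12, hs]
    have h3 : prefixOf gw (l + (m + 1)) =
        g.toFun (prefixOf w l) ++ (s.toFun (prefixOf t m) ++ (f (m % n)).toFun [t m]) := by
      rw [← hact, prefixOf_add_s12, hs, prefixOf_succ, hsec_t m]
    have key : g.toFun (prefixOf w l) ++ (s.toFun (prefixOf t m) ++ [gw (l + m)]) =
        g.toFun (prefixOf w l) ++ (s.toFun (prefixOf t m) ++ (f (m % n)).toFun [t m]) := by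
      rw [← List.append_assoc, ← h2, ← h1]
      exact h3
    exact List.append_cancel_left (List.append_cancel_left key)
  intro k hk
  obtain ⟨m, rfl⟩ := Nat.exists_eq_add_of_le hk
  obtain ⟨d, hd⟩ := Nat.dvd_factorial hnpos hn_le
  have hmod : (m + Nat.factorial c) % n = m % n := by
    rw [hd, Nat.add_mul_mod_self_left]
  have hwp : t (m + Nat.factorial c) = t m := by
    have := hw (l + m) (Nat.le_add_right l m)
    simpa [ht, Nat.add_assoc] using this
  have h1 := hletter (m + Nat.factorial c)
  have h2 := hletter m
  rw [hmod, hwp, ← h2] at h1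
  have : gw (l + (m + Nat.factorial c)) = gw (l + m) := by
    simpa using h1
  simpa [Nat.add_assoc] using this
end

section
/- The set X^ω of infinite words over X is not paradoxical with respect to the action of G_1: there do not exist automorphisms g_1,...,g_n, h_1,...,h_m in G_1 and pairwise disjoint subsets A_1,...,A_n, B_1,...,B_m of X^ω such that X^ω = ⋃_i g_i·A_i and X^ω = ⋃_j h_j·B_j. -/
namespace NP13


variable {X : Type*}

lemma toFun_nil (g : TreeAut X) : g.toFun [] = [] :=
  List.length_eq_zero_iff.mp (g.length_eq [])

lemma toFun_take (g : TreeAut X) (u : List X) (k : ℕ) :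
    g.toFun (u.take k) = (g.toFun u).take k := by
  have h := g.prefix_mono (u.take k) u (List.take_prefix k u)
  have h2 := List.prefix_iff_eq_take.mp h
  rcases le_or_gt k u.length with hk | hk
  · rw [h2, g.length_eq, List.length_take, min_eq_left hk]
  · rw [List.take_of_length_le (le_of_lt hk), List.take_of_length_le]
    rw [g.length_eq]; exact le_of_lt hk

lemma prefixOf_length (v : ℕ → X) (n : ℕ) : (prefixOf v n).length = n := by
  simp [prefixOf]

lemma prefixOf_getElem (v : ℕ → X) (n k : ℕ) (h : k < (prefixOf v n).length) :
    (prefixOf v n)[k] = v k := by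
  simp [prefixOf]

lemma prefixOf_take (v : ℕ → X) {n k : ℕ} (h : k ≤ n) :
    (prefixOf v n).take k = prefixOf v k := by
  simp only [prefixOf, ← List.map_take, List.take_range, min_eq_left h]

lemma prefixOf_add (v : ℕ → X) (a b : ℕ) :
    prefixOf v (a + b) = prefixOf v a ++ (List.range b).map (fun t => v (a + t)) := by
  simp only [prefixOf, List.range_add, List.map_append, List.map_map]
  rfl

def bAct (g : TreeAut X) (v : ℕ → X) : ℕ → X := fun k =>
  (g.toFun (prefixOf v (k+1)))[k]'(by rw [g.length_eq, prefixOf_length]; omega)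

lemma bAct_prefix (g : TreeAut X) (v : ℕ → X) (n : ℕ) :
    g.toFun (prefixOf v n) = prefixOf (bAct g v) n := by
  apply List.ext_getElem
  · rw [g.length_eq, prefixOf_length, prefixOf_length]
  · intro k h1 h2
    rw [prefixOf_getElem]
    show _ = (g.toFun (prefixOf v (k+1)))[k]'_
    have hk : k + 1 ≤ n := by
      rw [g.length_eq, prefixOf_length] at h1; omega
    have e : g.toFun (prefixOf v (k + 1)) = (g.toFun (prefixOf v n)).take (k+1) := by
      rw [← prefixOf_take v hk, toFun_take]
    rw [List.getElem_of_eq e, List.getElem_take]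

lemma actsOn_iff (g : TreeAut X) (w v : ℕ → X) : actsOn g w v ↔ v = bAct g w := by
  constructor
  · intro h; funext k
    have h1 := h (k+1)
    have h2 := bAct_prefix g w (k+1)
    have : prefixOf v (k+1) = prefixOf (bAct g w) (k+1) := by rw [← h1, h2]
    have hk : k < (prefixOf v (k+1)).length := by rw [prefixOf_length]; omega
    have := congrArg (fun L => L[k]?) this
    simpa [prefixOf_length, List.getElem?_eq_getElem, hk, prefixOf_getElem] using this
  · rintro rfl n; exact bAct_prefix g w n

lemma actImage_eq (g : TreeAut X) (A : Set (ℕ → X)) : actImage g A = bAct g '' A := by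
  ext v
  simp only [actImage, Set.mem_setOf_eq, Set.mem_image]
  constructor
  · rintro ⟨w, hw, h⟩; exact ⟨w, hw, ((actsOn_iff g w v).mp h).symm⟩
  · rintro ⟨w, hw, rfl⟩; exact ⟨w, hw, (actsOn_iff g w _).mpr rfl⟩

def cone (u : List X) : Set (ℕ → X) := {v | prefixOf v u.length = u}

lemma bAct_mem_cone (g : TreeAut X) (u : List X) {v : ℕ → X} (hv : v ∈ cone u) :
    bAct g v ∈ cone (g.toFun u) := by
  show prefixOf (bAct g v) (g.toFun u).length = g.toFun u
  rw [g.length_eq, ← bAct_prefix, hv]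

def rootApply (g : TreeAut X) (x : X) : X := (g.toFun [x]).getD 0 x

lemma toFun_singleton (g : TreeAut X) (x : X) : g.toFun [x] = [rootApply g x] := by
  have h : (g.toFun [x]).length = 1 := by rw [g.length_eq]; rfl
  obtain ⟨z, hz⟩ := List.length_eq_one_iff.mp h
  rw [rootApply, hz]; rfl

lemma rootApply_bijective (g : TreeAut X) : Function.Bijective (rootApply g) := by
  constructor
  · intro x y hxy
    have : g.toFun [x] = g.toFun [y] := by
      rw [toFun_singleton, toFun_singleton, hxy]
    have := g.bijective.injective this
    simpa using this
  · intro y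
    obtain ⟨u, hu⟩ := g.bijective.surjective [y]
    have hl : u.length = 1 := by rw [← g.length_eq, hu]; rfl
    obtain ⟨x, rfl⟩ := List.length_eq_one_iff.mp hl
    refine ⟨x, ?_⟩
    rw [toFun_singleton] at hu
    simpa using hu

noncomputable def rootPerm (g : TreeAut X) : Equiv.Perm X :=
  Equiv.ofBijective _ (rootApply_bijective g)

lemma isSection_of_inUC (s : TreeAut X) {n : ℕ} {f : ℕ → TreeAut X} (hn : 0 < n)
    (hf0 : f 0 = s)
    (hcyc : ∀ i < n, ∀ x : X, IsSection (f i) [x] (f ((i + 1) % n))) :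
    ∀ u : List X, IsSection s u (f (u.length % n)) := by
  intro u
  induction u using List.reverseRecOn with
  | nil =>
      intro t
      simp [toFun_nil, Nat.zero_mod, hf0]
  | append_singleton u x IH =>
      intro t
      have hmod : u.length % n < n := Nat.mod_lt _ hn
      have hc := hcyc (u.length % n) hmod x
      have h1 : s.toFun ((u ++ [x]) ++ t) = s.toFun u ++ (f (u.length % n)).toFun ([x] ++ t) := by
        rw [List.append_assoc]; exact IH ([x] ++ t)
      have h2 : s.toFun (u ++ [x]) = s.toFun u ++ (f (u.length % n)).toFun [x] := IH [x]
      rw [h1, hc t, h2, List.append_assoc]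
      congr 2
      have : (u ++ [x]).length = u.length + 1 := by simp
      rw [this]
      congr 1
      conv_rhs => rw [Nat.add_mod]
      conv_lhs => rw [Nat.add_mod, Nat.mod_mod_of_dvd _ (dvd_refl n)]

lemma exists_pi (g : TreeAut X) (w : List X)
    (h : ∃ s n, IsSection g w s ∧ InUC s n) :
    ∃ pi : ℕ → Equiv.Perm X, ∀ v ∈ cone w, ∀ k : ℕ,
      bAct g v (w.length + k) = pi k (v (w.length + k)) := by
  obtain ⟨s, n, hsec, hn, f, hf0, hcyc⟩ := h
  refine ⟨fun k => rootPerm (f (k % n)), ?_⟩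
  intro v hv k
  have hv' : prefixOf v w.length = w := hv
  set j := w.length + k with hj
  set mid := (List.range k).map (fun t => v (w.length + t)) with hmid
  have hmidlen : mid.length = k := by simp [hmid]
  have hpre : prefixOf v (j + 1) = w ++ (mid ++ [v j]) := by
    have : j + 1 = w.length + (k + 1) := by omega
    rw [this, prefixOf_add, hv']
    congr 1
    rw [List.range_succ, List.map_append, hmid]
    rfl
  have hsecu := isSection_of_inUC s hn hf0 hcyc mid
  have hcalc : g.toFun (prefixOf v (j+1))
      = (g.toFun w ++ s.toFun mid) ++ [rootApply (f (k % n)) (v j)] := by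
    rw [hpre, hsec, List.append_assoc]
    congr 1
    have := hsecu [v j]
    rw [this, hmidlen, toFun_singleton]
  show (g.toFun (prefixOf v (j+1)))[j]'_ = _
  have hlen : (g.toFun w ++ s.toFun mid).length = j := by
    simp [g.length_eq, s.length_eq, hmidlen, hj]
  rw [List.getElem_of_eq hcalc, List.getElem_concat_length hlen.symm]
  rfl

section Model

variable {X : Type*} [Fintype X] [DecidableEq X] {ι : Type} [Fintype ι] [DecidableEq ι]
variable (l : ℕ) (gel : ι → TreeAut X)

abbrev Wd (X : Type*) (l : ℕ) := List.Vector X l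

def pre (v : ℕ → X) : Wd X l := ⟨prefixOf v l, prefixOf_length v l⟩

@[simp] lemma pre_val (v : ℕ → X) : (pre l v).1 = prefixOf v l := rfl

def good (i : ι) (w : Wd X l) : Prop :=
  ∃ s n, IsSection (gel i) w.1 s ∧ InUC s n

open scoped Classical in
noncomputable def Pfun (i : ι) (w : Wd X l) : ℕ → Equiv.Perm X :=
  if h : good l gel i w then (exists_pi (gel i) w.1 h).choose else fun _ => 1

lemma Pfun_spec {i : ι} {w : Wd X l} (h : good l gel i w) :
    ∀ v ∈ cone w.1, ∀ k : ℕ,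
      bAct (gel i) v (w.1.length + k) = Pfun l gel i w k (v (w.1.length + k)) := by
  simp only [Pfun, dif_pos h]
  exact (exists_pi (gel i) w.1 h).choose_spec

noncomputable def tau (k : ℕ) : ι → Wd X l → Equiv.Perm X := fun i w => Pfun l gel i w k

abbrev Cm (X : Type*) (ι : Type) (l : ℕ) [Fintype X] [DecidableEq X] [Fintype ι] [DecidableEq ι] :=
  (Wd X l ≃ Wd X l) × ((ι → Wd X l → Equiv.Perm X) → Wd X l → Equiv.Perm X)

noncomputable def act (c : Cm X ι l) (v : ℕ → X) : ℕ → X := fun k =>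
  if hk : k < l then (c.1 (pre l v)).1[k]'(by rw [(c.1 (pre l v)).2]; exact hk)
  else c.2 (tau l gel (k - l)) (pre l v) (v k)

def compC (p q : Cm X ι l) : Cm X ι l :=
  ⟨p.1.trans q.1, fun r w => (p.2 r w).trans (q.2 r (p.1 w))⟩

def idCm : Cm X ι l := ⟨Equiv.refl _, fun _ _ => 1⟩

def invC (c : Cm X ι l) : Cm X ι l := ⟨c.1.symm, fun r w => (c.2 r (c.1.symm w))⁻¹⟩

lemma pre_act (c : Cm X ι l) (v : ℕ → X) : pre l (act l gel c v) = c.1 (pre l v) := by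
  apply Subtype.ext
  apply List.ext_getElem
  · rw [pre_val, prefixOf_length, (c.1 (pre l v)).2]
  · intro k h1 h2
    have e1 : (pre l (act l gel c v)).1 = prefixOf (act l gel c v) l := rfl
    rw [List.getElem_of_eq e1, prefixOf_getElem]
    show act l gel c v k = _
    rw [e1, prefixOf_length] at h1
    simp only [act, dif_pos h1]

lemma mem_cone_pre (v : ℕ → X) : v ∈ cone (pre l v).1 := by
  show prefixOf v (pre l v).1.length = (pre l v).1
  rw [(pre l v).2]; rfl

lemma act_comp (p q : Cm X ι l) (v : ℕ → X) :
    act l gel (compC l p q) v = act l gel q (act l gel p v) := by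
  funext k
  rcases lt_or_ge k l with hk | hk
  · simp only [act, dif_pos hk, compC, pre_act, Equiv.trans_apply]
  · have hk' : ¬ k < l := not_lt.mpr hk
    simp only [act, dif_neg hk', compC, pre_act, Equiv.trans_apply]

lemma act_id (v : ℕ → X) : act l gel (idCm l) v = v := by
  funext k
  rcases lt_or_ge k l with hk | hk
  · simp only [act, dif_pos hk, idCm, Equiv.refl_apply]
    show (pre l v).1[k]'_ = v k
    have : k < (prefixOf v l).length := by rw [prefixOf_length]; exact hk
    exact prefixOf_getElem v l k this
  · simp only [act, dif_neg (not_lt.mpr hk), idCm, Equiv.Perm.coe_one, id_eq]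

lemma comp_invC (c : Cm X ι l) : compC l c (invC l c) = idCm l := by
  unfold compC invC idCm
  refine Prod.ext ?_ ?_
  · simp [Equiv.self_trans_symm]
  · funext r w
    simp only [Equiv.symm_apply_apply]
    ext x
    simp

lemma invC_comp (c : Cm X ι l) : compC l (invC l c) c = idCm l := by
  unfold compC invC idCm
  refine Prod.ext ?_ ?_
  · simp [Equiv.symm_trans_self]
  · funext r w
    ext x
    simp

lemma act_bijective (c : Cm X ι l) : Function.Bijective (act l gel c) := by
  constructor
  · intro v v' h
    have : act l gel (invC l c) (act l gel c v) = act l gel (invC l c) (act l gel c v') := by rw [h]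
    rwa [← act_comp, ← act_comp, comp_invC, act_id, act_id] at this
  · intro v
    refine ⟨act l gel (invC l c) v, ?_⟩
    rw [← act_comp, invC_comp, act_id]

lemma compC_left_cancel (κ : Cm X ι l) : Function.Injective (compC l κ) := by
  intro c c' h
  unfold compC at h
  have h1 := congrArg Prod.fst h
  have h2 := congrArg Prod.snd h
  simp only at h1 h2
  refine Prod.ext ?_ ?_
  · refine Equiv.ext fun w => ?_
    have := congrArg (fun e => e (κ.1.symm w)) h1
    simpa using this
  · funext r w
    have := congrArg (fun d => d r (κ.1.symm w)) h2
    simp only at this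
    have h3 : ((κ.2 r (κ.1.symm w)).trans (c.2 r (κ.1 (κ.1.symm w))))
        = ((κ.2 r (κ.1.symm w)).trans (c'.2 r (κ.1 (κ.1.symm w)))) := this
    rw [Equiv.apply_symm_apply] at h3
    ext x
    have := congrArg (fun e => e ((κ.2 r (κ.1.symm w)).symm x)) h3
    simpa using this

lemma act_cone (c : Cm X ι l) (u : List X) (hu : u.length = l) :
    act l gel c '' cone u = cone (c.1 ⟨u, hu⟩).1 := by
  ext v'
  constructor
  · rintro ⟨v, hv, rfl⟩
    show prefixOf (act l gel c v) (c.1 ⟨u, hu⟩).1.length = (c.1 ⟨u, hu⟩).1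
    rw [(c.1 ⟨u, hu⟩).2]
    have hprev : pre l v = ⟨u, hu⟩ := by
      apply Subtype.ext
      show prefixOf v l = u
      rw [← hu]; exact hv
    have := congrArg Subtype.val (pre_act l gel c v)
    rw [hprev] at this
    exact this
  · intro hv'
    refine ⟨act l gel (invC l c) v', ?_, by rw [← act_comp, invC_comp, act_id]⟩
    show prefixOf (act l gel (invC l c) v') u.length = u
    have := congrArg Subtype.val (pre_act l gel (invC l c) v')
    have hprev' : pre l v' = c.1 ⟨u, hu⟩ := by
      apply Subtype.ext
      show prefixOf v' l = (c.1 ⟨u, hu⟩).1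
      have h2 : prefixOf v' ((c.1 ⟨u, hu⟩).1).length = (c.1 ⟨u, hu⟩).1 := hv'
      rw [← h2]
      congr 1
      exact ((c.1 ⟨u, hu⟩).2).symm
    rw [hprev'] at this
    simp only [invC, Equiv.symm_apply_apply] at this
    rw [hu]
    exact this.trans (congrArg Subtype.val (c.1.symm_apply_apply _))

noncomputable def levelPerm (g : TreeAut X) : Wd X l ≃ Wd X l :=
  Equiv.ofBijective (fun w => ⟨g.toFun w.1, by rw [g.length_eq, w.2]⟩) (by
    constructor
    · intro w w' h
      exact Subtype.ext (g.bijective.injective (congrArg Subtype.val h))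
    · intro u
      obtain ⟨v, hv⟩ := g.bijective.surjective u.1
      have hl : v.length = l := by rw [← g.length_eq, hv, u.2]
      exact ⟨⟨v, hl⟩, Subtype.ext hv⟩)

noncomputable def kap (i : ι) : Cm X ι l := ⟨levelPerm l (gel i), fun r w => r i w⟩

lemma act_kap {i : ι} {v : ℕ → X} (h : good l gel i (pre l v)) :
    act l gel (kap l gel i) v = bAct (gel i) v := by
  funext k
  rcases lt_or_ge k l with hk | hk
  · simp only [act, dif_pos hk]
    have e : ((kap l gel i).1 (pre l v)).1 = prefixOf (bAct (gel i) v) l :=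
      bAct_prefix (gel i) v l
    rw [List.getElem_of_eq e, prefixOf_getElem]
  · simp only [act, dif_neg (not_lt.mpr hk), kap, tau]
    have hspec := Pfun_spec l gel h v (mem_cone_pre l v) (k - l)
    rw [(pre l v).2] at hspec
    have : l + (k - l) = k := by omega
    rw [this] at hspec
    exact hspec.symm

end Model

section Counting

lemma ncard_biUnion_le {α β : Type*} [Finite α] (F : Finset β) (T : β → Set α) :
    (⋃ b ∈ F, T b).ncard ≤ ∑ b ∈ F, (T b).ncard := by
  classical
  induction F using Finset.induction with
  | empty => simp
  | insert a F ha IH =>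
    rw [Finset.set_biUnion_insert, Finset.sum_insert ha]
    exact le_trans (Set.ncard_union_le _ _) (Nat.add_le_add le_rfl IH)

lemma sum_ncard_le {α β : Type*} [Finite α] (F : Finset β) (T : β → Set α)
    (h : ∀ b b', b ≠ b' → Disjoint (T b) (T b')) :
    ∑ b ∈ F, (T b).ncard ≤ (⋃ b ∈ F, T b).ncard := by
  classical
  induction F using Finset.induction with
  | empty => simp
  | insert a F ha IH =>
    rw [Finset.set_biUnion_insert, Finset.sum_insert ha]
    have hdis : Disjoint (T a) (⋃ b ∈ F, T b) := by
      rw [Set.disjoint_iUnion₂_right]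
      intro b hb
      exact h a b (by rintro rfl; exact ha hb)
    rw [Set.ncard_union_eq hdis]
    exact Nat.add_le_add le_rfl IH

end Counting

section Measure

variable {X : Type*} [Fintype X] [DecidableEq X] {ι : Type} [Fintype ι] [DecidableEq ι]
variable (l : ℕ) (gel : ι → TreeAut X) (x₀ : X)

noncomputable instance : Fintype (Cm X ι l) := by infer_instance

def extW (w : Wd X l) : ℕ → X := fun k => w.1.getD k x₀

lemma prefixOf_extW (w : Wd X l) : prefixOf (extW l x₀ w) l = w.1 := by
  apply List.ext_getElem
  · rw [prefixOf_length, w.2]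
  · intro k h1 h2
    rw [prefixOf_getElem]
    exact List.getD_eq_getElem w.1 x₀ h2

noncomputable def mA (S : Set (ℕ → X)) : ℝ :=
    ({w : Wd X l | extW l x₀ w ∈ S}.ncard : ℝ) / (Fintype.card X : ℝ) ^ l

noncomputable def muA (S : Set (ℕ → X)) : ℝ :=
  (∑ c : Cm X ι l, mA l x₀ (act l gel c '' S)) / (Fintype.card (Cm X ι l) : ℝ)

lemma cardCm_pos : (0:ℝ) < (Fintype.card (Cm X ι l) : ℝ) := by
  have : Nonempty (Cm X ι l) := ⟨idCm l⟩
  exact_mod_cast Fintype.card_pos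

lemma muA_inv (κ : Cm X ι l) (S : Set (ℕ → X)) :
    muA l gel x₀ (act l gel κ '' S) = muA l gel x₀ S := by
  rw [muA, muA]
  congr 1
  have hbij : Function.Bijective (compC l κ) :=
    Finite.injective_iff_bijective.mp (compC_left_cancel l κ)
  calc ∑ c : Cm X ι l, mA l x₀ (act l gel c '' (act l gel κ '' S))
      = ∑ c : Cm X ι l, mA l x₀ (act l gel (compC l κ c) '' S) := by
        refine Finset.sum_congr rfl fun c _ => ?_
        have hfun : act l gel (compC l κ c) = act l gel c ∘ act l gel κ := by
          funext v; exact act_comp l gel κ c v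
        congr 1
        rw [← Set.image_comp, ← hfun]
    _ = ∑ c : Cm X ι l, mA l x₀ (act l gel c '' S) :=
        Fintype.sum_bijective (compC l κ) hbij _ _ (fun c => rfl)

variable (hX : 0 < Fintype.card X)
include hX

lemma qpos : (0:ℝ) < (Fintype.card X : ℝ) ^ l := by
  have : (0:ℝ) < (Fintype.card X : ℝ) := by exact_mod_cast hX
  positivity

lemma mA_univ : mA l x₀ (Set.univ) = 1 := by
  rw [mA]
  have h1 : {w : Wd X l | extW l x₀ w ∈ Set.univ} = Set.univ := by
    ext w; simp
  rw [h1, Set.ncard_univ, Nat.card_eq_fintype_card, card_vector]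
  push_cast
  rw [div_self (ne_of_gt (qpos l hX))]

lemma mA_mono {S T : Set (ℕ → X)} (h : S ⊆ T) : mA l x₀ S ≤ mA l x₀ T := by
  simp only [mA]
  apply div_le_div_of_nonneg_right _ (le_of_lt (qpos l hX))
  exact_mod_cast Set.ncard_le_ncard
    (s := {w : Wd X l | extW l x₀ w ∈ S}) (t := {w : Wd X l | extW l x₀ w ∈ T})
    (fun w hw => h hw) (Set.toFinite _)

lemma mA_union_le (S T : Set (ℕ → X)) :
    mA l x₀ (S ∪ T) ≤ mA l x₀ S + mA l x₀ T := by
  simp only [mA, ← add_div]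
  apply div_le_div_of_nonneg_right _ (le_of_lt (qpos l hX))
  have h1 : {w : Wd X l | extW l x₀ w ∈ S ∪ T}
      = {w : Wd X l | extW l x₀ w ∈ S} ∪ {w : Wd X l | extW l x₀ w ∈ T} := rfl
  rw [h1]
  exact_mod_cast Set.ncard_union_le _ _

lemma mA_biUnion_le {β : Type*} (F : Finset β) (S : β → Set (ℕ → X)) :
    mA l x₀ (⋃ b ∈ F, S b) ≤ ∑ b ∈ F, mA l x₀ (S b) := by
  simp only [mA]
  rw [← Finset.sum_div]
  apply div_le_div_of_nonneg_right _ (le_of_lt (qpos l hX))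
  have h1 : {w : Wd X l | extW l x₀ w ∈ ⋃ b ∈ F, S b}
      = ⋃ b ∈ F, {w : Wd X l | extW l x₀ w ∈ S b} := by
    ext w; simp
  rw [h1]
  exact_mod_cast ncard_biUnion_le F _

lemma mA_sum_disjoint {β : Type*} [Fintype β] (S : β → Set (ℕ → X))
    (h : ∀ b b', b ≠ b' → Disjoint (S b) (S b')) :
    ∑ b : β, mA l x₀ (S b) ≤ 1 := by
  simp only [mA]
  rw [← Finset.sum_div, div_le_one (qpos l hX)]
  have h2 : ∑ b : β, {w : Wd X l | extW l x₀ w ∈ S b}.ncard ≤ Fintype.card X ^ l := by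
    refine le_trans (sum_ncard_le Finset.univ _ ?_) ?_
    · intro b b' hbb
      rw [Set.disjoint_left]
      intro w hw hw'
      exact Set.disjoint_left.mp (h b b' hbb) hw hw'
    · calc (⋃ b ∈ (Finset.univ : Finset β), {w : Wd X l | extW l x₀ w ∈ S b}).ncard
          ≤ (Set.univ : Set (Wd X l)).ncard :=
            Set.ncard_le_ncard (Set.subset_univ _) (Set.toFinite _)
        _ = _ := by rw [Set.ncard_univ, Nat.card_eq_fintype_card, card_vector]
  exact_mod_cast h2

lemma mA_cone (u : List X) (hu : u.length = l) :
    mA l x₀ (cone u) = 1 / (Fintype.card X : ℝ) ^ l := by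
  rw [mA]
  have h1 : {w : Wd X l | extW l x₀ w ∈ cone u} = @singleton (Wd X l) (Set (Wd X l)) _ ⟨u, hu⟩ := by
    ext w
    simp only [Set.mem_setOf_eq, Set.mem_singleton_iff]
    constructor
    · intro hw
      have h2 : prefixOf (extW l x₀ w) u.length = u := hw
      rw [hu, prefixOf_extW] at h2
      exact Subtype.ext h2
    · rintro rfl
      show prefixOf (extW l x₀ ⟨u, hu⟩) u.length = u
      have := prefixOf_extW l x₀ (⟨u, hu⟩ : Wd X l)
      rw [hu]; exact this
  rw [h1, show (@singleton (Wd X l) (Set (Wd X l)) _ ⟨u, hu⟩).ncard = 1 from Set.ncard_singleton _]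
  push_cast; rfl

lemma muA_univ : muA l gel x₀ (Set.univ) = 1 := by
  rw [muA]
  have h1 : ∀ c : Cm X ι l, mA l x₀ (act l gel c '' Set.univ) = 1 := by
    intro c
    rw [Set.image_univ, Set.range_eq_univ.mpr (act_bijective l gel c).surjective]
    exact mA_univ l x₀ hX
  rw [Finset.sum_congr rfl (fun c _ => h1 c), Finset.sum_const, Finset.card_univ]
  simp only [nsmul_eq_mul, mul_one]
  rw [div_self (ne_of_gt (cardCm_pos (X := X) (ι := ι) l))]

lemma muA_mono {S T : Set (ℕ → X)} (h : S ⊆ T) : muA l gel x₀ S ≤ muA l gel x₀ T := by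
  simp only [muA]
  apply div_le_div_of_nonneg_right _ (le_of_lt (cardCm_pos (X := X) (ι := ι) l))
  exact Finset.sum_le_sum fun c _ => mA_mono l x₀ hX (Set.image_mono h)

lemma muA_union_le (S T : Set (ℕ → X)) :
    muA l gel x₀ (S ∪ T) ≤ muA l gel x₀ S + muA l gel x₀ T := by
  simp only [muA, ← add_div]
  apply div_le_div_of_nonneg_right _ (le_of_lt (cardCm_pos (X := X) (ι := ι) l))
  rw [← Finset.sum_add_distrib]
  refine Finset.sum_le_sum fun c _ => ?_
  rw [Set.image_union]
  exact mA_union_le l x₀ hX _ _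

lemma muA_biUnion_le {β : Type*} (F : Finset β) (S : β → Set (ℕ → X)) :
    muA l gel x₀ (⋃ b ∈ F, S b) ≤ ∑ b ∈ F, muA l gel x₀ (S b) := by
  simp only [muA]
  rw [← Finset.sum_div]
  apply div_le_div_of_nonneg_right _ (le_of_lt (cardCm_pos (X := X) (ι := ι) l))
  rw [Finset.sum_comm]
  refine Finset.sum_le_sum fun c _ => ?_
  rw [Set.image_iUnion₂]
  exact mA_biUnion_le l x₀ hX F _

lemma muA_cone (u : List X) (hu : u.length = l) :
    muA l gel x₀ (cone u) = 1 / (Fintype.card X : ℝ) ^ l := by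
  rw [muA]
  have h1 : ∀ c : Cm X ι l, mA l x₀ (act l gel c '' cone u)
      = 1 / (Fintype.card X : ℝ) ^ l := by
    intro c
    rw [act_cone l gel c u hu]
    exact mA_cone l x₀ hX _ (c.1 ⟨u, hu⟩).2
  rw [Finset.sum_congr rfl (fun c _ => h1 c), Finset.sum_const, Finset.card_univ]
  rw [nsmul_eq_mul, mul_div_cancel_left₀ _ (ne_of_gt (cardCm_pos (X := X) (ι := ι) l))]

lemma muA_sum_disjoint {β : Type*} [Fintype β] (S : β → Set (ℕ → X))
    (h : ∀ b b', b ≠ b' → Disjoint (S b) (S b')) :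
    ∑ b : β, muA l gel x₀ (S b) ≤ 1 := by
  simp only [muA]
  rw [← Finset.sum_div, div_le_one (cardCm_pos (X := X) (ι := ι) l)]
  rw [Finset.sum_comm]
  calc ∑ c : Cm X ι l, ∑ b : β, mA l x₀ (act l gel c '' S b)
      ≤ ∑ _c : Cm X ι l, (1:ℝ) := by
        refine Finset.sum_le_sum fun c _ => ?_
        exact mA_sum_disjoint l x₀ hX _ (fun b b' hbb =>
          Set.disjoint_image_of_injective (act_bijective l gel c).injective (h b b' hbb))
    _ = _ := by rw [Finset.sum_const, Finset.card_univ, nsmul_eq_mul, mul_one]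

end Measure

section Final

variable {X : Type*} [Fintype X] [DecidableEq X] {ι : Type} [Fintype ι] [DecidableEq ι]
variable (l : ℕ) (gel : ι → TreeAut X) (x₀ : X)

noncomputable def badF (i : ι) : Finset (Wd X l) :=
  (Set.toFinite {w : Wd X l | ¬ good l gel i w}).toFinset

lemma mem_badF {i : ι} {w : Wd X l} : w ∈ badF l gel i ↔ ¬ good l gel i w :=
  Set.Finite.mem_toFinset _

lemma badF_card (i : ι) : (badF l gel i).card = NC (gel i) l := by
  rw [NC, badF, ← Set.ncard_eq_toFinset_card]
  have h1 : {w : List X | w.length = l ∧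
      ¬ ∃ (s : TreeAut X) (n : ℕ), IsSection (gel i) w s ∧ InUC s n}
      = Subtype.val '' {w : Wd X l | ¬ good l gel i w} := by
    ext u
    simp only [Set.mem_setOf_eq, Set.mem_image]
    constructor
    · rintro ⟨hu, hnot⟩
      exact ⟨⟨u, hu⟩, hnot, rfl⟩
    · rintro ⟨⟨u', hu'⟩, hnot, rfl⟩
      exact ⟨hu', hnot⟩
  rw [h1, Set.ncard_image_of_injective _ Subtype.val_injective]
  rfl

variable (hX : 0 < Fintype.card X)
include hX

set_option maxHeartbeats 1000000 in
lemma muA_bAct_le (i : ι) (S : Set (ℕ → X)) :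
    muA l gel x₀ (bAct (gel i) '' S)
      ≤ muA l gel x₀ S + (NC (gel i) l : ℝ) / (Fintype.card X : ℝ) ^ l := by
  have hsub : bAct (gel i) '' S ⊆ (act l gel (kap l gel i) '' S)
      ∪ ⋃ w ∈ badF l gel i, cone ((gel i).toFun w.1) := by
    rintro v' ⟨v, hv, rfl⟩
    by_cases hg : good l gel i (pre l v)
    · left
      exact ⟨v, hv, act_kap l gel hg⟩
    · right
      refine Set.mem_iUnion₂.mpr ⟨pre l v, (mem_badF l gel).mpr hg, ?_⟩
      exact bAct_mem_cone (gel i) (pre l v).1 (mem_cone_pre l v)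
  calc muA l gel x₀ (bAct (gel i) '' S)
      ≤ muA l gel x₀ ((act l gel (kap l gel i) '' S)
          ∪ ⋃ w ∈ badF l gel i, cone ((gel i).toFun w.1)) := muA_mono l gel x₀ hX hsub
    _ ≤ muA l gel x₀ (act l gel (kap l gel i) '' S)
          + muA l gel x₀ (⋃ w ∈ badF l gel i, cone ((gel i).toFun w.1)) :=
        muA_union_le l gel x₀ hX _ _
    _ ≤ muA l gel x₀ S + ∑ w ∈ badF l gel i, muA l gel x₀ (cone ((gel i).toFun w.1)) :=
        add_le_add (le_of_eq (muA_inv l gel x₀ _ S)) (muA_biUnion_le l gel x₀ hX _ _)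
    _ = muA l gel x₀ S + ∑ _w ∈ badF l gel i, 1 / (Fintype.card X : ℝ) ^ l := by
        congr 1
        refine Finset.sum_congr rfl fun w _ => ?_
        exact muA_cone l gel x₀ hX _ (by rw [(gel i).length_eq, w.2])
    _ = muA l gel x₀ S + (NC (gel i) l : ℝ) / (Fintype.card X : ℝ) ^ l := by
        rw [Finset.sum_const, badF_card, nsmul_eq_mul]
        rw [mul_one_div]

end Final

end NP13

/-- `X^ω` is not `G₁`-paradoxical. -/
theorem not_paradoxical_G1 {X : Type*} [Fintype X] (hX : 1 < Fintype.card X) :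
    ¬ ∃ (n m : ℕ) (g : Fin n → TreeAut X) (h : Fin m → TreeAut X)
        (A : Fin n → Set (ℕ → X)) (B : Fin m → Set (ℕ → X)),
      (∀ i, memG1 (g i)) ∧ (∀ j, memG1 (h j)) ∧
      (∀ i j, i ≠ j → Disjoint (A i) (A j)) ∧
      (∀ i j, i ≠ j → Disjoint (B i) (B j)) ∧
      (∀ i j, Disjoint (A i) (B j)) ∧
      (⋃ i, actImage (g i) (A i)) = Set.univ ∧
      (⋃ j, actImage (h j) (B j)) = Set.univ := by
  classical
  rintro ⟨nn, mm, g, h, A, B, hg1, hh1, hAA, hBB, hAB, hcA, hcB⟩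
  have hXpos : 0 < Fintype.card X := by omega
  obtain ⟨x₀⟩ : Nonempty X := Fintype.card_pos_iff.mp hXpos
  let gel : (Fin nn ⊕ Fin mm) → TreeAut X := Sum.elim g h
  have hg1' : ∀ i : Fin nn ⊕ Fin mm, memG1 (gel i) := by
    rintro (i | j)
    · exact hg1 i
    · exact hh1 j
  set s : ℝ := (nn : ℝ) + (mm : ℝ) with hs
  have hs0 : 0 ≤ s := by positivity
  set ε : ℝ := 1 / (s + 1) with hεdef
  have hεpos : 0 < ε := by positivity
  choose L hL using fun i : Fin nn ⊕ Fin mm => hg1' i ε hεpos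
  set l : ℕ := Finset.univ.sup L with hldef
  have key : ∀ (i : Fin nn ⊕ Fin mm) (S : Set (ℕ → X)),
      NP13.muA l gel x₀ (NP13.bAct (gel i) '' S) ≤ NP13.muA l gel x₀ S + ε := by
    intro i S
    refine le_trans (NP13.muA_bAct_le l gel x₀ hXpos i S) ?_
    have h1 : (NC (gel i) l : ℝ) ≤ ε * (Fintype.card X : ℝ) ^ l :=
      hL i l (Finset.le_sup (Finset.mem_univ i))
    have h2 : (NC (gel i) l : ℝ) / (Fintype.card X : ℝ) ^ l ≤ ε := by
      rw [div_le_iff₀ (NP13.qpos l hXpos)]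
      exact h1
    linarith
  have covA : (1:ℝ) ≤ (∑ i : Fin nn, NP13.muA l gel x₀ (A i)) + (nn : ℝ) * ε := by
    calc (1:ℝ) = NP13.muA l gel x₀ Set.univ := (NP13.muA_univ l gel x₀ hXpos).symm
      _ = NP13.muA l gel x₀
            (⋃ i ∈ (Finset.univ : Finset (Fin nn)), NP13.bAct (g i) '' (A i)) := by
          congr 1
          rw [← hcA]
          ext v
          simp [NP13.actImage_eq]
      _ ≤ ∑ i : Fin nn, NP13.muA l gel x₀ (NP13.bAct (g i) '' (A i)) :=
          NP13.muA_biUnion_le l gel x₀ hXpos _ _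
      _ ≤ ∑ i : Fin nn, (NP13.muA l gel x₀ (A i) + ε) :=
          Finset.sum_le_sum fun i _ => key (Sum.inl i) (A i)
      _ = (∑ i : Fin nn, NP13.muA l gel x₀ (A i)) + (nn : ℝ) * ε := by
          rw [Finset.sum_add_distrib, Finset.sum_const, Finset.card_univ, Fintype.card_fin,
            nsmul_eq_mul]
  have covB : (1:ℝ) ≤ (∑ j : Fin mm, NP13.muA l gel x₀ (B j)) + (mm : ℝ) * ε := by
    calc (1:ℝ) = NP13.muA l gel x₀ Set.univ := (NP13.muA_univ l gel x₀ hXpos).symm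
      _ = NP13.muA l gel x₀
            (⋃ j ∈ (Finset.univ : Finset (Fin mm)), NP13.bAct (h j) '' (B j)) := by
          congr 1
          rw [← hcB]
          ext v
          simp [NP13.actImage_eq]
      _ ≤ ∑ j : Fin mm, NP13.muA l gel x₀ (NP13.bAct (h j) '' (B j)) :=
          NP13.muA_biUnion_le l gel x₀ hXpos _ _
      _ ≤ ∑ j : Fin mm, (NP13.muA l gel x₀ (B j) + ε) :=
          Finset.sum_le_sum fun j _ => key (Sum.inr j) (B j)
      _ = (∑ j : Fin mm, NP13.muA l gel x₀ (B j)) + (mm : ℝ) * ε := by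
          rw [Finset.sum_add_distrib, Finset.sum_const, Finset.card_univ, Fintype.card_fin,
            nsmul_eq_mul]
  have hdisj : ∀ b b' : Fin nn ⊕ Fin mm, b ≠ b' →
      Disjoint (Sum.elim A B b) (Sum.elim A B b') := by
    rintro (i | i) (j | j) hne
    · exact hAA i j (fun hij => hne (by rw [hij]))
    · exact hAB i j
    · exact (hAB j i).symm
    · exact hBB i j (fun hij => hne (by rw [hij]))
  have hsum : (∑ i : Fin nn, NP13.muA l gel x₀ (A i))
      + (∑ j : Fin mm, NP13.muA l gel x₀ (B j)) ≤ 1 := by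
    have h3 := NP13.muA_sum_disjoint l gel x₀ hXpos (Sum.elim A B) hdisj
    rw [Fintype.sum_sum_type] at h3
    simpa only [Sum.elim_inl, Sum.elim_inr] using h3
  have hlt : s * ε < 1 := by
    rw [hεdef, mul_one_div]
    rw [div_lt_one (by positivity)]
    linarith
  have hsε : (nn : ℝ) * ε + (mm : ℝ) * ε = s * ε := by rw [hs]; ring
  linarith
end
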